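/- arXiv:2207.06296 — 4 statements merged into one kernel-verified Lean document; each statement's English description precedes it below -/
import Mathlib

section
/- Let ω, c be real numbers with c > ω² > 0, and let B(ω,c,c) be the 4×4 real matrix with rows (0,0,1,0), (0,0,0,1), (c,0,0,2ω), (0,c,−2ω,0). Then every complex eigenvalue of B(ω,c,c) has nonzero real part, and at least one eigenvalue has strictly positive real part; in particular the corresponding linearized system is spectrally unstable. -/
open Polynomial

/-- The linearization matrix of the planar system `ẍ = 2ωJẋ + diag(c₁,c₂)x`. -/
def B (ω c₁ c₂ : ℝ) : Matrix (Fin 4) (Fin 4) ℝ :=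
  !![0, 0, 1, 0;
     0, 0, 0, 1;
     c₁, 0, 0, 2*ω;
     0, c₂, -(2*ω), 0]

/-!
The characteristic polynomial of `B ω c c` is the even quartic `X⁴ + aX² + b` with
`a² - 4b = 16ω²(ω² - c) < 0`. At `X = it` it takes the value `t⁴ - at² + b`, which the negative
discriminant keeps positive, so no eigenvalue is purely imaginary; and evenness pairs each root `z`
with the root `-z`, one of which must then have positive real part.
-/

lemma B_charpoly (ω c₁ c₂ : ℝ) :
    (B ω c₁ c₂).charpoly = X ^ 4 + C (4 * ω ^ 2 - c₁ - c₂) * X ^ 2 + C (c₁ * c₂) := by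
  simp [Matrix.charpoly, B, Matrix.charmatrix, Matrix.det_succ_row_zero, Fin.sum_univ_succ,
    Matrix.submatrix, Matrix.diagonal_apply, Fin.succAbove, map_ofNat]
  ring

lemma biquadratic_comp_neg_X {R : Type*} [CommRing R] (a b : R) :
    (X ^ 4 + C a * X ^ 2 + C b).comp (-X) = X ^ 4 + C a * X ^ 2 + C b := by
  simp only [add_comp, mul_comp, pow_comp, X_comp, C_comp]
  ring

lemma degree_biquadratic {R : Type*} [CommRing R] [Nontrivial R] (a b : R) :
    (X ^ 4 + C a * X ^ 2 + C b).degree = 4 := by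
  compute_degree!

lemma biquadratic_pos_of_discrim_neg {a b : ℝ} (h : a ^ 2 < 4 * b) (t : ℝ) :
    0 < t ^ 4 + a * t ^ 2 + b := by
  nlinarith [sq_nonneg (2 * t ^ 2 + a)]

lemma re_ne_zero_of_isRoot_biquadratic {a b : ℝ} (h : a ^ 2 < 4 * b) {μ : ℂ}
    (hμ : (X ^ 4 + C (a : ℂ) * X ^ 2 + C (b : ℂ)).IsRoot μ) : μ.re ≠ 0 := by
  intro hre
  have hμI : μ = μ.im * Complex.I := by apply Complex.ext <;> simp [hre]
  have hreal : ((μ.im ^ 4 + (-a) * μ.im ^ 2 + b : ℝ) : ℂ) = 0 := by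
    rw [IsRoot.def, hμI] at hμ
    simp only [eval_add, eval_mul, eval_pow, eval_X, eval_C, mul_pow, Complex.I_sq,
      Complex.I_pow_four] at hμ
    push_cast
    linear_combination hμ
  have hpos := biquadratic_pos_of_discrim_neg (a := -a) (by rwa [neg_sq]) μ.im
  exact hpos.ne' (by exact_mod_cast hreal)

lemma exists_isRoot_re_pos_of_comp_neg_X {p : ℂ[X]} (hp : 0 < p.degree) (heven : p.comp (-X) = p)
    (himag : ∀ μ, p.IsRoot μ → μ.re ≠ 0) : ∃ μ, p.IsRoot μ ∧ 0 < μ.re := by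
  obtain ⟨z, hz⟩ := Complex.exists_root hp
  have hneg : p.IsRoot (-z) := by
    rwa [IsRoot.def, ← heven, eval_comp, eval_neg, eval_X, neg_neg]
  rcases (himag z hz).lt_or_gt with h | h
  · exact ⟨-z, hneg, by simpa using h⟩
  · exact ⟨z, hz, h⟩

theorem B_spectrally_unstable_of_gt (ω c : ℝ) (h0 : 0 < ω ^ 2) (hc : ω ^ 2 < c) :
    (∀ μ : ℂ, (((B ω c c).map (Complex.ofReal)).charpoly).IsRoot μ → μ.re ≠ 0) ∧
    (∃ μ : ℂ, (((B ω c c).map (Complex.ofReal)).charpoly).IsRoot μ ∧ 0 < μ.re) := by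
  have hp : ((B ω c c).map Complex.ofReal).charpoly =
      X ^ 4 + C ((4 * ω ^ 2 - c - c : ℝ) : ℂ) * X ^ 2 + C ((c * c : ℝ) : ℂ) := by
    rw [show (B ω c c).map Complex.ofReal = (B ω c c).map Complex.ofRealHom from rfl,
      Matrix.charpoly_map, B_charpoly]
    simp only [Polynomial.map_add, Polynomial.map_mul, Polynomial.map_pow, map_X, map_C,
      Complex.ofRealHom_eq_coe]
  have hdisc : (4 * ω ^ 2 - c - c) ^ 2 < 4 * (c * c) := by nlinarith [mul_pos h0 (sub_pos.2 hc)]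
  have himag := fun μ ↦ hp ▸ re_ne_zero_of_isRoot_biquadratic (μ := μ) hdisc
  refine ⟨himag, exists_isRoot_re_pos_of_comp_neg_X ?_ ?_ himag⟩
  · rw [hp, degree_biquadratic]; norm_num
  · rw [hp, biquadratic_comp_neg_X]
end

section
/- Let 0 < α, set ω = √(3^(−α/2)·α), and let B₁ = B(ω, ω²(2+α), 0) be the 4×4 real matrix with rows (0,0,1,0), (0,0,0,1), (ω²(2+α),0,0,2ω), (0,0,−2ω,0). Then the characteristic polynomial of B₁ is X²·(X² + ω²(2−α)); hence its eigenvalues are 0 (with multiplicity 2) together with ±iω√(2−α), which are nonzero purely imaginary for 0 < α < 2, zero for α = 2, and real ±ω√(α−2) for α > 2. -/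
open Polynomial

/-- The angular speed `ω = √(3^(−α/2)·α)` of the equilateral triangle relative
equilibrium under the α-homogeneous potential. -/
noncomputable def ωtri (α : ℝ) : ℝ := Real.sqrt ((3:ℝ) ^ (-(α/2)) * α)

lemma charB (ω c₁ c₂ : ℝ) :
    (B ω c₁ c₂).charpoly =
      (X^2 - C c₁) * (X^2 - C c₂) + C (4*ω^2) * X^2 := by
  have h : (B ω c₁ c₂).charmatrix =
      !![X, 0, -1, 0;
         0, X, 0, -1;
         -C c₁, 0, X, -C (2*ω);
         0, -C c₂, C (2*ω), X] := by
    ext i j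
    fin_cases i <;> fin_cases j <;>
      simp [Matrix.charmatrix_apply, B, Matrix.one_apply]
  rw [Matrix.charpoly, h]
  simp [Matrix.det_succ_row_zero, Fin.sum_univ_succ, show ((2:Fin 4).succAbove 2) = (3:Fin 4) from rfl]
  have h2 : C (2:ℝ) * C ω * (C 2 * C ω) = C 4 * C ω^2 := by
    rw [← C_mul, ← C_mul, ← C_pow, ← C_mul]; congr 1; ring
  rw [h2]; ring

lemma root_iff (c : ℝ) (r μ : ℂ) (hr : r ^ 2 = -((c : ℂ))) :
    (Polynomial.map (algebraMap ℝ ℂ) (X ^ 2 * (X ^ 2 + C c))).IsRoot μ ↔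
      μ = 0 ∨ μ = r ∨ μ = -r := by
  have key : μ ^ 2 + (c : ℂ) = (μ - r) * (μ + r) := by
    have : (μ - r) * (μ + r) = μ ^ 2 - r ^ 2 := by ring
    rw [this, hr]; ring
  simp only [Polynomial.IsRoot, Polynomial.map_mul, Polynomial.map_add, Polynomial.map_pow,
    Polynomial.map_X, Polynomial.map_C, Complex.coe_algebraMap, eval_mul, eval_add, eval_pow,
    eval_X, eval_C, key]
  rw [mul_eq_zero, mul_eq_zero, pow_eq_zero_iff (two_ne_zero), sub_eq_zero,
    add_eq_zero_iff_eq_neg]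

theorem B₁_triangle_alpha (α : ℝ) (hα : 0 < α) :
    (B (ωtri α) ((ωtri α) ^ 2 * (2 + α)) 0).charpoly =
      X ^ 2 * (X ^ 2 + C ((ωtri α) ^ 2 * (2 - α))) ∧
    (α < 2 → ∀ μ : ℂ,
      (((B (ωtri α) ((ωtri α) ^ 2 * (2 + α)) 0).map (Complex.ofReal)).charpoly).IsRoot μ ↔
        μ = 0 ∨ μ = Complex.I * (ωtri α : ℂ) * (Real.sqrt (2 - α) : ℂ) ∨
          μ = -(Complex.I * (ωtri α : ℂ) * (Real.sqrt (2 - α) : ℂ))) ∧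
    (α = 2 → ∀ μ : ℂ,
      (((B (ωtri α) ((ωtri α) ^ 2 * (2 + α)) 0).map (Complex.ofReal)).charpoly).IsRoot μ ↔
        μ = 0) ∧
    (2 < α → ∀ μ : ℂ,
      (((B (ωtri α) ((ωtri α) ^ 2 * (2 + α)) 0).map (Complex.ofReal)).charpoly).IsRoot μ ↔
        μ = 0 ∨ μ = (ωtri α : ℂ) * (Real.sqrt (α - 2) : ℂ) ∨
          μ = -((ωtri α : ℂ) * (Real.sqrt (α - 2) : ℂ))) := by
  set w := ωtri α with hw
  have hcp : (B w (w ^ 2 * (2 + α)) 0).charpoly =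
      X ^ 2 * (X ^ 2 + C (w ^ 2 * (2 - α))) := by
    rw [charB]
    have hC : C (w ^ 2 * (2 - α)) = C (4 * w ^ 2) - C (w ^ 2 * (2 + α)) := by
      rw [← C_sub]; congr 1; ring
    rw [hC]; simp only [map_zero]; ring
  have hmap : ∀ μ : ℂ,
      (((B w (w ^ 2 * (2 + α)) 0).map (Complex.ofReal)).charpoly).IsRoot μ ↔
      (Polynomial.map (algebraMap ℝ ℂ) (X ^ 2 * (X ^ 2 + C (w ^ 2 * (2 - α))))).IsRoot μ := by
    intro μ
    have : (B w (w ^ 2 * (2 + α)) 0).map (Complex.ofReal) =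
        (B w (w ^ 2 * (2 + α)) 0).map (algebraMap ℝ ℂ) := rfl
    rw [this, Matrix.charpoly_map, hcp]
  refine ⟨hcp, ?_, ?_, ?_⟩
  · intro h2 μ
    have hs : ((Real.sqrt (2 - α) : ℝ) : ℂ) ^ 2 = ((2 - α : ℝ) : ℂ) := by
      rw [← Complex.ofReal_pow, Real.sq_sqrt (by linarith : (0:ℝ) ≤ 2 - α)]
    rw [hmap μ, root_iff]
    rw [mul_pow, mul_pow, Complex.I_sq, hs]
    push_cast; ring
  · intro h2 μ
    rw [hmap μ, root_iff _ 0 μ (by rw [h2]; norm_num)]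
    simp
  · intro h2 μ
    have hs : ((Real.sqrt (α - 2) : ℝ) : ℂ) ^ 2 = ((α - 2 : ℝ) : ℂ) := by
      rw [← Complex.ofReal_pow, Real.sq_sqrt (by linarith : (0:ℝ) ≤ α - 2)]
    rw [hmap μ, root_iff]
    rw [mul_pow, hs]
    push_cast; ring
end

section
/- Let α > 0, set ω = √(3^(−α/2)·α) and c = ω²·(1 + 3α/2), and let B₃ = B(ω,c,c) be the 4×4 real matrix with rows (0,0,1,0), (0,0,0,1), (c,0,0,2ω), (0,c,−2ω,0). Then the characteristic polynomial of B₃ is X⁴ + ω²(2−3α)·X² + ω⁴(1+3α/2)², its four complex eigenvalues are ±(ω/√2)·√(3α − 2 ± 2i√(6α)), every eigenvalue has nonzero real part, and at least one eigenvalue has strictly positive real part. Consequently, the relative equilibrium of three equal masses at the equilateral triangle central configuration under the α-homogeneous potential is spectrally unstable for every α > 0. -/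
open Polynomial

/-- `c = ω²·(1 + 3α/2)`, the entry of the essential block `B₃ = B(ω,c,c)`. -/
noncomputable def ctri (α : ℝ) : ℝ := (ωtri α) ^ 2 * (1 + 3 * α / 2)

/-- `μ₊ = (ω/√2)·√(3α − 2 + 2i√(6α))`, one of the eigenvalues of `B₃`. -/
noncomputable def μtriP (α : ℝ) : ℂ :=
  ((ωtri α : ℂ) / (Real.sqrt 2 : ℂ)) *
    (((3 * α - 2 : ℝ) : ℂ) + 2 * (Real.sqrt (6 * α) : ℂ) * Complex.I) ^ (1/2 : ℂ)

/-- `μ₋ = (ω/√2)·√(3α − 2 − 2i√(6α))`, one of the eigenvalues of `B₃`. -/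
noncomputable def μtriM (α : ℝ) : ℂ :=
  ((ωtri α : ℂ) / (Real.sqrt 2 : ℂ)) *
    (((3 * α - 2 : ℝ) : ℂ) - 2 * (Real.sqrt (6 * α) : ℂ) * Complex.I) ^ (1/2 : ℂ)

lemma charpoly_B_self (ω c : ℝ) :
    (B ω c c).charpoly = X ^ 4 + C (4 * ω ^ 2 - 2 * c) * X ^ 2 + C (c ^ 2) := by
  have h : (B ω c c).charmatrix =
      !![X, 0, -1, 0; 0, X, 0, -1; -C c, 0, X, -C (2 * ω); 0, -C c, C (2 * ω), X] := by
    ext i j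
    fin_cases i <;> fin_cases j <;> simp [B]
  rw [Matrix.charpoly, h, Matrix.det_succ_row_zero]
  simp [Fin.sum_univ_four, Matrix.det_fin_three, Fin.succAbove]
  simp only [map_ofNat]
  ring

lemma biquadratic_eq_prod {R : Type*} [CommRing R] {p q a b : R}
    (hp : p = -(a ^ 2 + b ^ 2)) (hq : q = a ^ 2 * b ^ 2) :
    (X ^ 4 + C p * X ^ 2 + C q : R[X]) = (X - C a) * (X + C a) * (X - C b) * (X + C b) := by
  subst hp hq
  simp only [map_add, map_mul, map_pow, map_neg]
  ring

lemma Complex.re_ne_zero_of_im_sq_ne_zero {μ : ℂ} (h : (μ ^ 2).im ≠ 0) : μ.re ≠ 0 := by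
  contrapose! h
  simp [sq, h]

lemma Complex.im_sq_ne_zero_of_biquadratic_eq_zero {p q : ℝ} (hdisc : p ^ 2 < 4 * q) {μ : ℂ}
    (hμ : μ ^ 4 + p * μ ^ 2 + q = 0) : (μ ^ 2).im ≠ 0 := by
  intro him
  set w := (μ ^ 2).re
  have hw : μ ^ 2 = (w : ℂ) := Complex.ext rfl (by simp [him])
  have hroot : w ^ 2 + p * w + q = 0 := by
    have := congrArg Complex.re hμ
    rw [show μ ^ 4 = (μ ^ 2) ^ 2 by ring, hw] at this
    simpa [← Complex.ofReal_pow] using this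
  nlinarith [sq_nonneg (2 * w + p)]

lemma Complex.exists_isRoot_re_pos_of_isRoot_neg {P : ℂ[X]} {μ : ℂ} (h : P.IsRoot μ)
    (hneg : P.IsRoot (-μ)) (hre : μ.re ≠ 0) : ∃ ν, P.IsRoot ν ∧ 0 < ν.re := by
  rcases hre.lt_or_gt with hlt | hgt
  · exact ⟨-μ, hneg, by simpa using hlt⟩
  · exact ⟨μ, h, hgt⟩

lemma Complex.cpow_half_sq (z : ℂ) : (z ^ (1 / 2 : ℂ)) ^ 2 = z := by
  simp [one_div]

lemma ωtri_pos {α : ℝ} (hα : 0 < α) : 0 < ωtri α := by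
  unfold ωtri; positivity

lemma charpoly_B₃ (α : ℝ) :
    (B (ωtri α) (ctri α) (ctri α)).charpoly =
      X ^ 4 + C (ωtri α ^ 2 * (2 - 3 * α)) * X ^ 2 + C (ωtri α ^ 4 * (1 + 3 * α / 2) ^ 2) := by
  have hp : 4 * ωtri α ^ 2 - 2 * ctri α = ωtri α ^ 2 * (2 - 3 * α) := by rw [ctri]; ring
  have hq : ctri α ^ 2 = ωtri α ^ 4 * (1 + 3 * α / 2) ^ 2 := by rw [ctri]; ring
  rw [charpoly_B_self, hp, hq]

lemma μtriP_sq (α : ℝ) : μtriP α ^ 2 =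
    (ωtri α : ℂ) ^ 2 / 2 * (((3 * α - 2 : ℝ) : ℂ) + 2 * (Real.sqrt (6 * α) : ℂ) * Complex.I) := by
  rw [μtriP, mul_pow, div_pow, Complex.cpow_half_sq, ← Complex.ofReal_pow √2,
    Real.sq_sqrt zero_le_two, Complex.ofReal_ofNat]

lemma μtriM_sq (α : ℝ) : μtriM α ^ 2 =
    (ωtri α : ℂ) ^ 2 / 2 * (((3 * α - 2 : ℝ) : ℂ) - 2 * (Real.sqrt (6 * α) : ℂ) * Complex.I) := by
  rw [μtriM, mul_pow, div_pow, Complex.cpow_half_sq, ← Complex.ofReal_pow √2,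
    Real.sq_sqrt zero_le_two, Complex.ofReal_ofNat]

lemma μtriP_sq_add_μtriM_sq (α : ℝ) :
    μtriP α ^ 2 + μtriM α ^ 2 = -((ωtri α ^ 2 * (2 - 3 * α) : ℝ) : ℂ) := by
  rw [μtriP_sq, μtriM_sq]
  push_cast
  ring

lemma μtriP_sq_mul_μtriM_sq {α : ℝ} (hα : 0 ≤ α) :
    μtriP α ^ 2 * μtriM α ^ 2 = ((ωtri α ^ 4 * (1 + 3 * α / 2) ^ 2 : ℝ) : ℂ) := by
  have hs : (Real.sqrt (6 * α) : ℂ) ^ 2 = 6 * α := by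
    exact_mod_cast Real.sq_sqrt (by positivity : (0 : ℝ) ≤ 6 * α)
  rw [μtriP_sq, μtriM_sq]
  push_cast
  linear_combination
    (ωtri α : ℂ) ^ 4 * hs - (ωtri α : ℂ) ^ 4 * (Real.sqrt (6 * α) : ℂ) ^ 2 * Complex.I_sq

lemma charpoly_map_B₃ (α : ℝ) :
    ((B (ωtri α) (ctri α) (ctri α)).map Complex.ofReal).charpoly =
      X ^ 4 + C ((ωtri α ^ 2 * (2 - 3 * α) : ℝ) : ℂ) * X ^ 2 +
        C ((ωtri α ^ 4 * (1 + 3 * α / 2) ^ 2 : ℝ) : ℂ) := by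
  change (Matrix.map _ Complex.ofRealHom).charpoly = _
  rw [Matrix.charpoly_map, charpoly_B₃]
  simp only [Polynomial.map_add, Polynomial.map_mul, Polynomial.map_pow, Polynomial.map_X,
    Polynomial.map_C, Complex.ofRealHom_eq_coe]

lemma charpoly_map_B₃_eq_prod {α : ℝ} (hα : 0 ≤ α) :
    ((B (ωtri α) (ctri α) (ctri α)).map Complex.ofReal).charpoly =
      (X - C (μtriP α)) * (X + C (μtriP α)) * (X - C (μtriM α)) * (X + C (μtriM α)) := by
  rw [charpoly_map_B₃]
  exact biquadratic_eq_prod (by rw [μtriP_sq_add_μtriM_sq, neg_neg])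
    (μtriP_sq_mul_μtriM_sq hα).symm

lemma re_ne_zero_of_isRoot_charpoly_map_B₃ {α : ℝ} (hα : 0 < α) {μ : ℂ}
    (hμ : ((B (ωtri α) (ctri α) (ctri α)).map Complex.ofReal).charpoly.IsRoot μ) :
    μ.re ≠ 0 := by
  have hdisc : (ωtri α ^ 2 * (2 - 3 * α)) ^ 2 < 4 * (ωtri α ^ 4 * (1 + 3 * α / 2) ^ 2) := by
    have : 0 < ωtri α ^ 4 * (24 * α) := by have := ωtri_pos hα; positivity
    linear_combination this
  rw [charpoly_map_B₃] at hμ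
  refine Complex.re_ne_zero_of_im_sq_ne_zero
    (Complex.im_sq_ne_zero_of_biquadratic_eq_zero hdisc ?_)
  simpa [Polynomial.IsRoot] using hμ

/-- The essential block of the linearization at the equilateral triangle relative
equilibrium under the α-homogeneous potential is spectrally unstable for all `α > 0`. -/
theorem B₃_triangle_alpha_unstable (α : ℝ) (hα : 0 < α) :
    (B (ωtri α) (ctri α) (ctri α)).charpoly =
      X ^ 4 + C ((ωtri α) ^ 2 * (2 - 3 * α)) * X ^ 2 +
        C ((ωtri α) ^ 4 * (1 + 3 * α / 2) ^ 2) ∧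
    ((B (ωtri α) (ctri α) (ctri α)).map (Complex.ofReal)).charpoly =
      (X - C (μtriP α)) * (X + C (μtriP α)) * (X - C (μtriM α)) * (X + C (μtriM α)) ∧
    (∀ μ : ℂ,
      (((B (ωtri α) (ctri α) (ctri α)).map (Complex.ofReal)).charpoly).IsRoot μ →
        μ.re ≠ 0) ∧
    (∃ μ : ℂ,
      (((B (ωtri α) (ctri α) (ctri α)).map (Complex.ofReal)).charpoly).IsRoot μ ∧
        0 < μ.re) := by
  have hprod := charpoly_map_B₃_eq_prod hα.le
  have hroot :
      ((B (ωtri α) (ctri α) (ctri α)).map Complex.ofReal).charpoly.IsRoot (μtriP α) := by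
    simp [hprod]
  have hroot_neg :
      ((B (ωtri α) (ctri α) (ctri α)).map Complex.ofReal).charpoly.IsRoot (-μtriP α) := by
    simp [hprod]
  exact ⟨charpoly_B₃ α, hprod, fun μ => re_ne_zero_of_isRoot_charpoly_map_B₃ hα,
    Complex.exists_isRoot_re_pos_of_isRoot_neg hroot hroot_neg
      (re_ne_zero_of_isRoot_charpoly_map_B₃ hα hroot)⟩
end

section
/- Let α > 0, set ω² = (2^(−1−α) + 2^(−α/2))·α and c = ω² + 2^(−α/2)·α², and let B₄ = B(ω,c,c) be the 4×4 real matrix with rows (0,0,1,0), (0,0,0,1), (c,0,0,2ω), (0,c,−2ω,0), where ω = √(ω²) > 0. Then every complex eigenvalue of B₄ has nonzero real part, and at least one eigenvalue has strictly positive real part. Consequently, the relative equilibrium of four equal masses at the square central configuration under the α-homogeneous potential is spectrally unstable for every α > 0. -/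
/-!
The characteristic polynomial of `B(ω, c₁, c₂)` is the biquadratic
`μ⁴ + (4ω² − c₁ − c₂)μ² + c₁c₂`. For `B₄ = B(ω, c, c)` with `0 < ω² < c`, the quadratic
`z² + (4ω² − 2c)z + c²` in `z = μ²` has negative discriminant `16ω²(ω² − c)`, so no root `z` is
real and nonpositive, i.e. no eigenvalue `μ` is purely imaginary. As the polynomial is even, its
roots are symmetric under `μ ↦ −μ`, so one of them has positive real part.
-/

open Polynomial

/-- `ω² = (2^(−1−α) + 2^(−α/2))·α`, the squared angular speed of the square relative
equilibrium under the α-homogeneous potential. -/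
noncomputable def ωsq2 (α : ℝ) : ℝ := ((2:ℝ) ^ (-1 - α) + (2:ℝ) ^ (-(α/2))) * α

/-- `c = ω² + 2^(−α/2)·α²`, the entry of the block `B₄ = B(ω,c,c)`. -/
noncomputable def csq (α : ℝ) : ℝ := ωsq2 α + (2:ℝ) ^ (-(α/2)) * α ^ 2

lemma isRoot_charpoly_map_B_iff (ω c₁ c₂ : ℝ) (μ : ℂ) :
    ((B ω c₁ c₂).map Complex.ofReal).charpoly.IsRoot μ ↔
      μ ^ 4 + ((4 * ω ^ 2 - c₁ - c₂ : ℝ) : ℂ) * μ ^ 2 + ((c₁ * c₂ : ℝ) : ℂ) = 0 := by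
  rw [show (B ω c₁ c₂).map Complex.ofReal = (B ω c₁ c₂).map Complex.ofRealHom from rfl,
    Matrix.charpoly_map, B_charpoly]
  simp [IsRoot]

lemma re_ne_zero_of_biquadratic_root {p q : ℝ} (hpq : p ^ 2 < 4 * q) {μ : ℂ}
    (hμ : μ ^ 4 + p * μ ^ 2 + q = 0) : μ.re ≠ 0 := by
  intro hre
  set y := μ.im
  have hsq : μ ^ 2 = ((-y ^ 2 : ℝ) : ℂ) := by
    rw [← Complex.re_add_im μ, hre]
    push_cast
    linear_combination (y : ℂ) ^ 2 * Complex.I_sq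
  have hy : (((y ^ 2) ^ 2 - p * y ^ 2 + q : ℝ) : ℂ) = 0 := by
    push_cast at hsq ⊢
    linear_combination hμ - (μ ^ 2 - (y : ℂ) ^ 2 + p) * hsq
  nlinarith [Complex.ofReal_eq_zero.mp hy, sq_nonneg (2 * y ^ 2 - p)]

lemma exists_biquadratic_root_re_pos {p q : ℝ} (hpq : p ^ 2 < 4 * q) :
    ∃ μ : ℂ, μ ^ 4 + p * μ ^ 2 + q = 0 ∧ 0 < μ.re := by
  have hdeg : (X ^ 4 + C (p : ℂ) * X ^ 2 + C (q : ℂ)).natDegree = 4 := by compute_degree!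
  obtain ⟨z, hz⟩ := Complex.exists_root (natDegree_pos_iff_degree_pos.mp (by rw [hdeg]; norm_num))
  simp only [IsRoot.def, eval_add, eval_mul, eval_pow, eval_C, eval_X] at hz
  rcases (re_ne_zero_of_biquadratic_root hpq hz).lt_or_gt with h | h
  · exact ⟨-z, by linear_combination hz, by simpa using h⟩
  · exact ⟨z, hz, h⟩

/-- The block of the linearization at the square relative equilibrium under the
α-homogeneous potential corresponding to the double Hessian eigenvalue `2^(−α/2)α²`
is spectrally unstable for all `α > 0`. -/
theorem B₄_square_alpha_unstable (α : ℝ) (hα : 0 < α) :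
    (∀ μ : ℂ,
      (((B (Real.sqrt (ωsq2 α)) (csq α) (csq α)).map (Complex.ofReal)).charpoly).IsRoot μ →
        μ.re ≠ 0) ∧
    (∃ μ : ℂ,
      (((B (Real.sqrt (ωsq2 α)) (csq α) (csq α)).map (Complex.ofReal)).charpoly).IsRoot μ ∧
        0 < μ.re) := by
  have hω : 0 < ωsq2 α := by unfold ωsq2; positivity
  have hc : ωsq2 α < csq α := lt_add_of_pos_right _ (by positivity)
  -- the discriminant `(4ω² − 2c)² − 4c²` equals `16ω²(ω² − c)`
  have hdisc : (4 * √(ωsq2 α) ^ 2 - csq α - csq α) ^ 2 < 4 * (csq α * csq α) := by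
    rw [Real.sq_sqrt hω.le]
    nlinarith [mul_pos hω (sub_pos.2 hc)]
  simp only [isRoot_charpoly_map_B_iff]
  exact ⟨fun μ => re_ne_zero_of_biquadratic_root hdisc, exists_biquadratic_root_re_pos hdisc⟩
end
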